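/- arXiv:2511.01614 — 3 statements merged into one kernel-verified Lean document; each statement's English description precedes it below -/
import Mathlib

section
/- Let ω ∈ [0,1]^n be a weighting vector, ε ∈ [0,1], and δ ∈ [0,1] with δ ≤ min{ε/(1 - min{ω_1, ω_n}), 1}. Then R_δ ⊆ R_ε^{Ψ_ω}, i.e., every x ∈ [0,1]^n with max_{i<j}|x_i - x_j| ≤ δ satisfies max_k |x_k - Ψ_ω(x)| ≤ ε. -/
/-- The OWA operator: `OWA ω x = Σ_k ω_k x_{σ(k)}` where σ sorts x in decreasing
order (the k-th summand weights the k-th largest component of x). -/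
noncomputable def OWA {n : ℕ} (ω : Fin n → ℝ) (x : Fin n → ℝ) : ℝ :=
  ∑ k : Fin n, ω k * x (Tuple.sort x (Fin.rev k))

/-- If δ ≤ min{ε/(1 - min{ω_1, ω_n}), 1} then R_δ ⊆ R_ε^{Ψ_ω}
(here n ≥ 2, written as n + 2, with ω_1 = ω 0 and ω_n = ω (last)). -/
theorem stmt_11 {n : ℕ} (ω : Fin (n + 2) → ℝ)
    (hω : ∀ k, ω k ∈ Set.Icc (0:ℝ) 1) (hω1 : ∑ k, ω k = 1)
    (hωlt : min (ω 0) (ω (Fin.last (n + 1))) < 1)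
    (ε δ : ℝ) (hε : ε ∈ Set.Icc (0:ℝ) 1) (hδ01 : δ ∈ Set.Icc (0:ℝ) 1)
    (hδ : δ ≤ min (ε / (1 - min (ω 0) (ω (Fin.last (n + 1))))) 1) :
    ∀ x : Fin (n + 2) → ℝ, (∀ i, x i ∈ Set.Icc (0:ℝ) 1) →
      (∀ i j : Fin (n + 2), i < j → |x i - x j| ≤ δ) →
      ∀ k, |x k - OWA ω x| ≤ ε := by
  intro x hx hκ k
  set m := min (ω 0) (ω (Fin.last (n + 1))) with hm
  have hmpos : 0 < 1 - m := by linarith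
  have hkey : δ * (1 - m) ≤ ε := by
    have h1 := le_trans hδ (min_le_left _ _)
    calc δ * (1 - m) ≤ (ε / (1 - m)) * (1 - m) := by
          apply mul_le_mul_of_nonneg_right h1 (le_of_lt hmpos)
      _ = ε := div_mul_cancel₀ _ (ne_of_gt hmpos)
  set s := Tuple.sort x with hs
  set a := x (s 0) with ha
  set b := x (s (Fin.last (n + 1))) with hb
  have hmono : Monotone (x ∘ s) := Tuple.monotone_sort x
  have hal : ∀ i, a ≤ x i := by
    intro i
    have : x i = x (s (s⁻¹ i)) := by simp
    rw [this]
    exact hmono (Fin.zero_le _)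
  have hbl : ∀ i, x i ≤ b := by
    intro i
    have : x i = x (s (s⁻¹ i)) := by simp
    rw [this]
    exact hmono (Fin.le_last _)
  have hba : b - a ≤ δ := by
    have hne : s 0 ≠ s (Fin.last (n + 1)) := by
      intro h
      have := s.injective h
      exact absurd this.symm Fin.last_pos.ne'
    rcases lt_or_gt_of_ne hne with h | h
    · have := hκ _ _ h
      rw [abs_sub_comm] at this
      calc b - a ≤ |b - a| := le_abs_self _
        _ ≤ δ := this
    · have := hκ (s (Fin.last (n + 1))) (s 0) h
      calc b - a ≤ |b - a| := le_abs_self _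
        _ ≤ δ := this
  have hab : a ≤ b := hbl (s 0)
  -- lower bound for OWA
  have hlow : ω 0 * b + (1 - ω 0) * a ≤ OWA ω x := by
    rw [OWA]
    have hsplit : ∑ j : Fin (n + 2), ω j * x (s (Fin.rev j))
        = ω 0 * x (s (Fin.rev 0)) + ∑ j ∈ Finset.univ.erase 0, ω j * x (s (Fin.rev j)) :=
      (Finset.add_sum_erase _ _ (Finset.mem_univ 0)).symm
    rw [hsplit, Fin.rev_zero]
    have h2 : (1 - ω 0) * a ≤ ∑ j ∈ Finset.univ.erase 0, ω j * x (s (Fin.rev j)) := by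
      have : ∑ j ∈ Finset.univ.erase 0, ω j * a
          ≤ ∑ j ∈ Finset.univ.erase 0, ω j * x (s (Fin.rev j)) :=
        Finset.sum_le_sum fun j _ =>
          mul_le_mul_of_nonneg_left (hal _) (hω j).1
      calc (1 - ω 0) * a = (∑ j ∈ Finset.univ.erase 0, ω j) * a := by
            rw [Finset.sum_erase_eq_sub (Finset.mem_univ 0), hω1]
        _ = ∑ j ∈ Finset.univ.erase 0, ω j * a := by rw [Finset.sum_mul]
        _ ≤ _ := this
    linarith
  -- upper bound for OWA
  have hhigh : OWA ω x ≤ ω (Fin.last (n + 1)) * a + (1 - ω (Fin.last (n + 1))) * b := by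
    rw [OWA]
    have hsplit : ∑ j : Fin (n + 2), ω j * x (s (Fin.rev j))
        = ω (Fin.last (n + 1)) * x (s (Fin.rev (Fin.last (n + 1))))
          + ∑ j ∈ Finset.univ.erase (Fin.last (n + 1)), ω j * x (s (Fin.rev j)) :=
      (Finset.add_sum_erase _ _ (Finset.mem_univ _)).symm
    rw [hsplit, Fin.rev_last]
    have h2 : ∑ j ∈ Finset.univ.erase (Fin.last (n + 1)), ω j * x (s (Fin.rev j))
        ≤ (1 - ω (Fin.last (n + 1))) * b := by
      have : ∑ j ∈ Finset.univ.erase (Fin.last (n + 1)), ω j * x (s (Fin.rev j))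
          ≤ ∑ j ∈ Finset.univ.erase (Fin.last (n + 1)), ω j * b :=
        Finset.sum_le_sum fun j _ =>
          mul_le_mul_of_nonneg_left (hbl _) (hω j).1
      calc _ ≤ ∑ j ∈ Finset.univ.erase (Fin.last (n + 1)), ω j * b := this
        _ = (∑ j ∈ Finset.univ.erase (Fin.last (n + 1)), ω j) * b := by
            rw [Finset.sum_mul]
        _ = (1 - ω (Fin.last (n + 1))) * b := by
            rw [Finset.sum_erase_eq_sub (Finset.mem_univ _), hω1]
    linarith
  have hm0 : m ≤ ω 0 := min_le_left _ _
  have hml : m ≤ ω (Fin.last (n + 1)) := min_le_right _ _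
  have hδ0 : 0 ≤ δ := hδ01.1
  have hxa := hal k
  have hxb := hbl k
  rw [abs_le]
  constructor
  · -- -ε ≤ x k - OWA, i.e. OWA - x k ≤ ε
    have h1 : OWA ω x - x k ≤ (1 - ω (Fin.last (n + 1))) * (b - a) := by nlinarith
    have h2 : (1 - ω (Fin.last (n + 1))) * (b - a) ≤ (1 - m) * δ := by nlinarith
    nlinarith
  · have h1 : x k - OWA ω x ≤ (1 - ω 0) * (b - a) := by nlinarith
    have h2 : (1 - ω 0) * (b - a) ≤ (1 - m) * δ := by nlinarith
    nlinarith
end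

section
/- Let ω ∈ [0,1]^n be a weighting vector and ε, δ ∈ [0,1]. If R_δ ⊆ R_ε^{Ψ_ω} then δ ≤ min{ε/(1 - min{ω_1, ω_n}), 1}. -/
lemma sort_single {m : ℕ} (x : Fin (m+1) → ℝ) (δ : ℝ) (hδ : 0 < δ) (i0 : Fin (m+1))
    (hx : ∀ j, x j = if j = i0 then δ else 0) :
    ∀ i, x (Tuple.sort x i) = if i = Fin.last m then δ else 0 := by
  set σ := Tuple.sort x with hσ
  have mono := Tuple.monotone_sort x
  set j0 := σ.symm i0 with hj0
  have hσj0 : σ j0 = i0 := Equiv.apply_symm_apply σ i0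
  have hval : ∀ i, x (σ i) = if i = j0 then δ else 0 := by
    intro i
    rcases eq_or_ne i j0 with h | h
    · simp [h, hσj0, hx]
    · have : σ i ≠ i0 := by
        intro hc; exact h (by rw [hj0, ← hc, Equiv.symm_apply_apply])
      simp [hx, this, h]
  have hj0last : j0 = Fin.last m := by
    by_contra h
    have hlt : j0 < Fin.last m := lt_of_le_of_ne (Fin.le_last _) h
    have h2 := mono hlt.le
    rw [Function.comp_apply, Function.comp_apply, hval j0, hval (Fin.last m),
      if_pos rfl, if_neg (fun hc => h hc.symm)] at h2
    exact absurd (h2.trans_lt hδ) (lt_irrefl δ)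
  intro i; rw [hval i, hj0last]

lemma sort_cosingle {m : ℕ} (x : Fin (m+1) → ℝ) (δ : ℝ) (hδ : 0 < δ) (i0 : Fin (m+1))
    (hx : ∀ j, x j = if j = i0 then 0 else δ) :
    ∀ i, x (Tuple.sort x i) = if i = 0 then 0 else δ := by
  set σ := Tuple.sort x with hσ
  have mono := Tuple.monotone_sort x
  set j0 := σ.symm i0 with hj0
  have hσj0 : σ j0 = i0 := Equiv.apply_symm_apply σ i0
  have hval : ∀ i, x (σ i) = if i = j0 then 0 else δ := by
    intro i
    rcases eq_or_ne i j0 with h | h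
    · simp [h, hσj0, hx]
    · have : σ i ≠ i0 := by
        intro hc; exact h (by rw [hj0, ← hc, Equiv.symm_apply_apply])
      simp [hx, this, h]
  have hj00 : j0 = 0 := by
    by_contra h
    have hlt : (0 : Fin (m+1)) < j0 := Fin.pos_of_ne_zero h
    have h2 := mono hlt.le
    rw [Function.comp_apply, Function.comp_apply, hval 0, hval j0,
      if_pos rfl, if_neg (fun hc => h hc.symm)] at h2
    exact absurd (h2.trans_lt hδ) (lt_irrefl δ)
  intro i; rw [hval i, hj00]

lemma fin_rev_eq_last {m : ℕ} (k : Fin (m+1)) : Fin.rev k = Fin.last m ↔ k = 0 := by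
  constructor
  · intro h; have := congrArg Fin.rev h; rwa [Fin.rev_rev, Fin.rev_last] at this
  · intro h; rw [h, ← Fin.rev_last, Fin.rev_rev]

lemma fin_rev_eq_zero {m : ℕ} (k : Fin (m+1)) : Fin.rev k = 0 ↔ k = Fin.last m := by
  constructor
  · intro h; have := congrArg Fin.rev h; rwa [Fin.rev_rev, Fin.rev_zero] at this
  · intro h; rw [h, Fin.rev_last]

/-- If R_δ ⊆ R_ε^{Ψ_ω} then δ ≤ min{ε/(1 - min{ω_1, ω_n}), 1}. -/
theorem stmt_12 {n : ℕ} (ω : Fin (n + 2) → ℝ)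
    (hω : ∀ k, ω k ∈ Set.Icc (0:ℝ) 1) (hω1 : ∑ k, ω k = 1)
    (hωlt : min (ω 0) (ω (Fin.last (n + 1))) < 1)
    (ε δ : ℝ) (hε : ε ∈ Set.Icc (0:ℝ) 1) (hδ01 : δ ∈ Set.Icc (0:ℝ) 1)
    (hsub : ∀ x : Fin (n + 2) → ℝ, (∀ i, x i ∈ Set.Icc (0:ℝ) 1) →
      (∀ i j : Fin (n + 2), i < j → |x i - x j| ≤ δ) →
      ∀ k, |x k - OWA ω x| ≤ ε) :
    δ ≤ min (ε / (1 - min (ω 0) (ω (Fin.last (n + 1))))) 1 := by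
  set m := min (ω 0) (ω (Fin.last (n + 1))) with hm
  have hmpos : 0 < 1 - m := by linarith
  rcases eq_or_lt_of_le hδ01.1 with hδ0 | hδ0
  · refine le_min ?_ (hδ01.2)
    rw [← hδ0]
    exact div_nonneg hε.1 hmpos.le
  -- main case δ > 0
  have hω0 := hω 0
  have hωl := hω (Fin.last (n + 1))
  -- witness 1 : δ at 0, 0 elsewhere
  have h1 : (1 - ω 0) * δ ≤ ε := by
    set x1 : Fin (n+2) → ℝ := fun i => if i = 0 then δ else 0 with hx1
    have hsort := sort_single x1 δ hδ0 0 (fun j => rfl)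
    have howa : OWA ω x1 = ω 0 * δ := by
      unfold OWA
      have : ∀ k : Fin (n+2), ω k * x1 (Tuple.sort x1 (Fin.rev k))
          = if k = 0 then ω k * δ else 0 := by
        intro k
        rw [hsort (Fin.rev k)]
        rcases eq_or_ne k 0 with h | h
        · rw [if_pos ((fin_rev_eq_last k).2 h), if_pos h]
        · rw [if_neg (fun hc => h ((fin_rev_eq_last k).1 hc)), if_neg h, mul_zero]
      rw [Finset.sum_congr rfl (fun k _ => this k), Finset.sum_ite_eq' Finset.univ 0
        (fun k => ω k * δ)]
      simp
    have key := hsub x1 ?_ ?_ 0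
    · rw [howa] at key
      simp only [hx1, if_pos rfl] at key
      have : |δ - ω 0 * δ| = (1 - ω 0) * δ := by
        rw [abs_of_nonneg] <;> nlinarith [hω0.1, hω0.2]
      linarith [this ▸ key]
    · intro i; simp only [hx1]
      split_ifs <;> constructor <;> first | exact hδ01.1 | exact hδ01.2 | norm_num
    · intro i j hij
      simp only [hx1]
      split_ifs <;> simp [abs_sub_comm, abs_of_nonneg hδ0.le, hδ0.le]
  -- witness 2 : 0 at 0, δ elsewhere
  have h2 : (1 - ω (Fin.last (n+1))) * δ ≤ ε := by
    set x2 : Fin (n+2) → ℝ := fun i => if i = 0 then 0 else δ with hx2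
    have hsort := sort_cosingle x2 δ hδ0 0 (fun j => rfl)
    have howa : OWA ω x2 = (1 - ω (Fin.last (n+1))) * δ := by
      unfold OWA
      have : ∀ k : Fin (n+2), ω k * x2 (Tuple.sort x2 (Fin.rev k))
          = ω k * δ - (if k = Fin.last (n+1) then ω k * δ else 0) := by
        intro k
        rw [hsort (Fin.rev k)]
        rcases eq_or_ne k (Fin.last (n+1)) with h | h
        · rw [if_pos ((fin_rev_eq_zero k).2 h), if_pos h]; ring
        · rw [if_neg (fun hc => h ((fin_rev_eq_zero k).1 hc)), if_neg h]; ring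
      rw [Finset.sum_congr rfl (fun k _ => this k), Finset.sum_sub_distrib,
        ← Finset.sum_mul, hω1, Finset.sum_ite_eq' Finset.univ (Fin.last (n+1))
        (fun k => ω k * δ)]
      simp; ring
    have key := hsub x2 ?_ ?_ 0
    · rw [howa] at key
      simp only [hx2, if_pos rfl] at key
      have : |0 - (1 - ω (Fin.last (n+1))) * δ| = (1 - ω (Fin.last (n+1))) * δ := by
        rw [abs_of_nonpos] <;> nlinarith [hωl.1, hωl.2]
      linarith [this ▸ key]
    · intro i; simp only [hx2]
      split_ifs <;> constructor <;> first | exact hδ01.1 | exact hδ01.2 | norm_num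
    · intro i j hij
      simp only [hx2]
      split_ifs <;> simp [abs_sub_comm, abs_of_nonneg hδ0.le, hδ0.le]
  refine le_min ?_ hδ01.2
  rw [le_div_iff₀ hmpos]
  rcases le_total (ω 0) (ω (Fin.last (n+1))) with hc | hc
  · rw [hm, min_eq_left hc]; nlinarith
  · rw [hm, min_eq_right hc]; nlinarith
end

section
/- Let δ ∈ [0,1], c ∈ [0,1]^n a cost vector, o ∈ [0,1]^n, and let x* minimize ξ_c^o(x) = Σ_k c_k |x_k - o_k| over R_δ = {x ∈ [0,1]^n : max_{i<j}|x_i - x_j| ≤ δ}. Assume c_k > 0 for all k. Then for each i, x*_i ∈ {max_j x*_j, min_j x*_j, o_i}. -/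
/-- If x* minimizes ξ_c^o(x) = Σ_k c_k |x_k - o_k| over
R_δ = {x ∈ [0,1]^n : |x_i - x_j| ≤ δ for all i < j}, with all costs positive, then each
component x*_i is either the maximum of x*, the minimum of x*, or o_i. -/
theorem stmt_18 {n : ℕ} [NeZero n] (δ : ℝ) (hδ : δ ∈ Set.Icc (0:ℝ) 1)
    (c : Fin n → ℝ) (hc : ∀ k, c k ∈ Set.Ioc (0:ℝ) 1)
    (o : Fin n → ℝ) (ho : ∀ k, o k ∈ Set.Icc (0:ℝ) 1)
    (xs : Fin n → ℝ)
    (hxs : (∀ i, xs i ∈ Set.Icc (0:ℝ) 1) ∧ ∀ i j : Fin n, i < j → |xs i - xs j| ≤ δ)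
    (hmin : ∀ y : Fin n → ℝ,
      ((∀ i, y i ∈ Set.Icc (0:ℝ) 1) ∧ ∀ i j : Fin n, i < j → |y i - y j| ≤ δ) →
      ∑ k, c k * |xs k - o k| ≤ ∑ k, c k * |y k - o k|) :
    ∀ i : Fin n,
      xs i = Finset.univ.sup' Finset.univ_nonempty xs ∨
      xs i = Finset.univ.inf' Finset.univ_nonempty xs ∨
      xs i = o i := by
  obtain ⟨hbox, hpair⟩ := hxs
  set M := Finset.univ.sup' Finset.univ_nonempty xs with hMdef
  set m := Finset.univ.inf' Finset.univ_nonempty xs with hmdef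
  obtain ⟨a, -, ha'⟩ := Finset.exists_mem_eq_sup' Finset.univ_nonempty xs
  obtain ⟨b, -, hb'⟩ := Finset.exists_mem_eq_inf' Finset.univ_nonempty xs
  have ha : M = xs a := ha'
  have hb : m = xs b := hb'
  have hmM : ∀ j, m ≤ xs j ∧ xs j ≤ M := fun j =>
    ⟨Finset.inf'_le _ (Finset.mem_univ j), Finset.le_sup' _ (Finset.mem_univ j)⟩
  have hMm : M - m ≤ δ := by
    rcases lt_trichotomy a b with h | h | h
    · have h1 := hpair a b h
      have h2 : xs a - xs b ≤ |xs a - xs b| := le_abs_self _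
      rw [ha, hb]; linarith
    · rw [ha, hb, h]; simpa using hδ.1
    · have h1 := hpair b a h
      have h2 : xs a - xs b ≤ |xs b - xs a| := by
        rw [abs_sub_comm]; exact le_abs_self _
      rw [ha, hb]; linarith
  intro i
  by_contra hcon
  push_neg at hcon
  obtain ⟨h1, h2, h3⟩ := hcon
  have hiM : xs i < M := lt_of_le_of_ne (hmM i).2 h1
  have him : m < xs i := lt_of_le_of_ne (hmM i).1 (Ne.symm h2)
  have hmle : m ≤ M := (hmM i).1.trans (hmM i).2
  set t := max m (min M (o i)) with ht
  have htm : m ≤ t := le_max_left _ _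
  have htM : t ≤ M := max_le hmle (min_le_left _ _)
  have hlt : |t - o i| < |xs i - o i| := by
    rcases le_or_gt (o i) M with hoM | hoM
    · rcases le_or_gt m (o i) with hom | hom
      · have htv : t = o i := by rw [ht, min_eq_right hoM, max_eq_right hom]
        rw [htv, sub_self, abs_zero]
        exact abs_pos.mpr (sub_ne_zero.mpr h3)
      · have htv : t = m := by rw [ht, min_eq_right hoM, max_eq_left hom.le]
        rw [htv]
        have h1' : |m - o i| = m - o i := abs_of_pos (by linarith)
        have h2' : xs i - o i ≤ |xs i - o i| := le_abs_self _
        linarith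
    · have htv : t = M := by rw [ht, min_eq_left hoM.le, max_eq_right hmle]
      rw [htv]
      have h1' : |M - o i| = o i - M := by
        rw [abs_sub_comm]; exact abs_of_pos (by linarith)
      have h2' : o i - xs i ≤ |xs i - o i| := by
        rw [abs_sub_comm]; exact le_abs_self _
      linarith
  set y := Function.update xs i t with hy
  have hyrange : ∀ j, m ≤ y j ∧ y j ≤ M := by
    intro j
    rcases eq_or_ne j i with rfl | hne
    · simp [hy, htm, htM]
    · simp only [hy, Function.update_of_ne hne]; exact hmM j
  have hyfeas : (∀ j, y j ∈ Set.Icc (0:ℝ) 1) ∧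
      ∀ j k : Fin n, j < k → |y j - y k| ≤ δ := by
    constructor
    · intro j
      rcases eq_or_ne j i with rfl | hne
      · constructor
        · have h0m : (0:ℝ) ≤ m := hb ▸ (hbox b).1
          simpa [hy] using h0m.trans htm
        · have hM1 : M ≤ 1 := ha ▸ (hbox a).2
          simpa [hy] using htM.trans hM1
      · simp only [hy, Function.update_of_ne hne]; exact hbox j
    · intro j k _
      have hj := hyrange j
      have hk := hyrange k
      rw [abs_sub_le_iff]
      constructor <;> linarith
  have hle := hmin y hyfeas
  have hsum : ∑ k, c k * |y k - o k| < ∑ k, c k * |xs k - o k| := by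
    apply Finset.sum_lt_sum
    · intro k _
      rcases eq_or_ne k i with rfl | hne
      · simp only [hy, Function.update_self]
        exact le_of_lt (mul_lt_mul_of_pos_left hlt (hc k).1)
      · simp [hy, Function.update_of_ne hne]
    · refine ⟨i, Finset.mem_univ i, ?_⟩
      simp only [hy, Function.update_self]
      exact mul_lt_mul_of_pos_left hlt (hc i).1
  linarith
end
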